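/- Let (M,d) be a compact metric space, Θ₁ ⊂ Θ₂ ⊂ ⋯ ⊂ Θ_∞ ⊂ M with Θ_∞ = closure(∪ₙ Θₙ) compact, positive sequences εₙ → 0, τₙ → 0, δₙ → 0, and continuous functions f, gₙ : Θ_∞ → ℝ. Suppose (i) each gₙ satisfies |gₙ(θ₁) − gₙ(θ₂)| ≤ L_g·d(θ₁,θ₂) + τₙ for all θ₁,θ₂, with gₙ ≥ 0 and sup_{θ∈Θ_∞}|gₙ(θ) − g(θ)| ≤ δₙ; (ii) there is a compact subset Θ̃_∞ ⊂ Θ_∞ such that every θ₀ ∈ Θ̃_∞ has some θ ∈ Θₙ with d(θ,θ₀) ≤ εₙ. Let fₙ* = min{f(θ) : θ ∈ Θₙ, gₙ(θ) ≤ L_g εₙ + δₙ}, f* = min{f(θ) : θ ∈ Θ_∞, g(θ) = 0}, and f̃* = min{f(θ) : θ ∈ Θ̃_∞, g(θ) = 0}, assuming the latter two feasible sets are nonempty. Then liminf fₙ* ≥ f* and limsup fₙ* ≤ f̃*, i.e. [liminf fₙ*, limsup fₙ*] ⊂ [f*, f̃*]. -/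

import Mathlib

/-!
The limit `g` of the approximately Lipschitz constraints is exactly `L`-Lipschitz and nonnegative.
Upper bound: a point `θ₀ ∈ Θ̃_∞` with `g θ₀ = 0` is approximated by `θₙ ∈ Θₙ` with
`d(θₙ, θ₀) ≤ εₙ`, and then `gₙ θₙ ≤ g θₙ + δₙ ≤ L εₙ + δₙ`, so `θₙ` is feasible and
`fₙ* ≤ f θₙ → f θ₀`. Lower bound: feasible points of the `n`-th problem satisfy
`g ≤ L εₙ + 2 δₙ → 0`, and by compactness, for every `c < f*` there is `m > 0` such that
`f > c` wherever `g < m`.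
-/

open Filter Topology Set

section

variable {α ι : Type*}

lemma tendsto_of_dist_le [PseudoMetricSpace α] {l : Filter ι} {u : ι → α} {a : α} {r : ι → ℝ}
    (h : ∀ i, dist (u i) a ≤ r i) (hr : Tendsto r l (𝓝 0)) : Tendsto u l (𝓝 a) :=
  tendsto_iff_dist_tendsto_zero.2 (squeeze_zero (fun _ => dist_nonneg) h hr)

lemma abs_sub_le_mul_dist_of_tendsto [PseudoMetricSpace α] {l : Filter ι} [l.NeBot]
    {s : Set α} {g : α → ℝ} {gn : ι → α → ℝ} {L : ℝ} {τ : ι → ℝ}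
    (hconv : ∀ x ∈ s, Tendsto (fun i => gn i x) l (𝓝 (g x))) (hτ : Tendsto τ l (𝓝 0))
    (hlip : ∀ i, ∀ x ∈ s, ∀ y ∈ s, |gn i x - gn i y| ≤ L * dist x y + τ i) :
    ∀ x ∈ s, ∀ y ∈ s, |g x - g y| ≤ L * dist x y := by
  intro x hx y hy
  simpa using le_of_tendsto_of_tendsto' ((hconv x hx).sub (hconv y hy)).abs
    (tendsto_const_nhds.add hτ) fun i => hlip i x hx y hy

/-- `g + (f - c)⁺` is positive on `X`, hence bounded below there by some `m > 0`. -/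
lemma IsCompact.exists_pos_lt_of_lt_on_zeros [TopologicalSpace α] {X : Set α}
    (hX : IsCompact X) {f g : α → ℝ} (hf : ContinuousOn f X) (hg : ContinuousOn g X)
    (hg0 : ∀ x ∈ X, 0 ≤ g x) {c : ℝ} (hc : ∀ x ∈ X, g x = 0 → c < f x) :
    ∃ m > 0, ∀ x ∈ X, g x < m → c < f x := by
  have hpos : ∀ x ∈ X, 0 < g x + max (f x - c) 0 := fun x hx => by
    rcases (hg0 x hx).lt_or_eq with hgx | hgx
    · exact add_pos_of_pos_of_nonneg hgx (le_max_right _ _)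
    · rw [← hgx, zero_add]
      exact lt_max_of_lt_left (sub_pos.2 (hc x hx hgx.symm))
  have hcont : ContinuousOn (fun x => g x + max (f x - c) 0) X := by fun_prop
  obtain ⟨m, hm, hmle⟩ := hX.exists_forall_le' hcont hpos
  refine ⟨m, hm, fun x hx hgx => ?_⟩
  by_contra! hfx
  have := hmle x hx
  rw [max_eq_right (sub_nonpos.2 hfx)] at this
  linarith

section OptimalValue

variable {l : Filter ι} {f : α → ℝ} {S : ι → Set α} {c : ℝ} {s : ι → α} {y : ℝ}

lemma isBoundedUnder_le_sInf_image (hc : ∀ i, ∀ x ∈ S i, c ≤ f x) (hs : ∀ i, s i ∈ S i)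
    (hsy : Tendsto (fun i => f (s i)) l (𝓝 y)) :
    IsBoundedUnder (· ≤ ·) l (fun i => sInf (f '' S i)) :=
  hsy.isBoundedUnder_le.mono_le <| .of_forall fun i =>
    csInf_le ⟨c, forall_mem_image.2 (hc i)⟩ (mem_image_of_mem f (hs i))

lemma limsup_sInf_image_le [l.NeBot] (hc : ∀ i, ∀ x ∈ S i, c ≤ f x) (hs : ∀ i, s i ∈ S i)
    (hsy : Tendsto (fun i => f (s i)) l (𝓝 y)) :
    limsup (fun i => sInf (f '' S i)) l ≤ y := by
  rw [← hsy.limsup_eq]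
  exact limsup_le_limsup
    (.of_forall fun i => csInf_le ⟨c, forall_mem_image.2 (hc i)⟩ (mem_image_of_mem f (hs i)))
    (isCoboundedUnder_le_of_le l fun i =>
      le_csInf ⟨_, mem_image_of_mem f (hs i)⟩ (forall_mem_image.2 (hc i)))
    hsy.isBoundedUnder_le

lemma le_liminf_sInf_image [l.NeBot] (hc : ∀ i, ∀ x ∈ S i, c ≤ f x) (hs : ∀ i, s i ∈ S i)
    (hsy : Tendsto (fun i => f (s i)) l (𝓝 y)) {a : ℝ}
    (ha : ∀ b < a, ∀ᶠ i in l, ∀ x ∈ S i, b ≤ f x) :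
    a ≤ liminf (fun i => sInf (f '' S i)) l :=
  le_of_forall_lt_imp_le_of_dense fun b hb =>
    le_liminf_of_le (isBoundedUnder_le_sInf_image hc hs hsy).isCoboundedUnder_ge <|
      (ha b hb).mono fun i hi => le_csInf ⟨_, mem_image_of_mem f (hs i)⟩ (forall_mem_image.2 hi)

lemma sInf_image_zeros_le_liminf [TopologicalSpace α] [l.NeBot] {X : Set α} (hX : IsCompact X)
    {g : α → ℝ} (hf : ContinuousOn f X) (hg : ContinuousOn g X) (hg0 : ∀ x ∈ X, 0 ≤ g x)
    (hSX : ∀ i, S i ⊆ X) {r : ι → ℝ} (hgr : ∀ i, ∀ x ∈ S i, g x ≤ r i)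
    (hr : Tendsto r l (𝓝 0)) (hs : ∀ i, s i ∈ S i) (hsy : Tendsto (fun i => f (s i)) l (𝓝 y)) :
    sInf (f '' {x | x ∈ X ∧ g x = 0}) ≤ liminf (fun i => sInf (f '' S i)) l := by
  have hbdd := hX.bddBelow_image hf
  obtain ⟨c, hc⟩ := id hbdd
  refine le_liminf_sInf_image (fun i x hx => hc (mem_image_of_mem f (hSX i hx))) hs hsy
    fun b hb => ?_
  have hbZ : ∀ x ∈ X, g x = 0 → b < f x := fun x hx hgx =>
    hb.trans_le <| csInf_le (hbdd.mono (image_mono fun _ hx => hx.1)) ⟨x, ⟨hx, hgx⟩, rfl⟩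
  obtain ⟨m, hm, hmf⟩ := hX.exists_pos_lt_of_lt_on_zeros hf hg hg0 hbZ
  filter_upwards [hr.eventually_lt_const hm] with i hi x hx
  exact (hmf x (hSX i hx) ((hgr i x hx).trans_lt hi)).le

end OptimalValue

lemma exists_feasible_seq_tendsto [PseudoMetricSpace α] {l : Filter ι} {X : Set α}
    {Θ : ι → Set α} (hΘX : ∀ i, Θ i ⊆ X) {f g : α → ℝ} {gn : ι → α → ℝ} {L : ℝ} (hL : 0 ≤ L)
    {ε δ : ι → ℝ} (hf : ContinuousOn f X) (hglip : ∀ x ∈ X, ∀ y ∈ X, |g x - g y| ≤ L * dist x y)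
    (hunif : ∀ i, ∀ x ∈ X, |gn i x - g x| ≤ δ i) (hε : Tendsto ε l (𝓝 0)) {x₀ : α}
    (hx₀ : x₀ ∈ X) (hgx₀ : g x₀ = 0) (happ : ∀ i, ∃ x ∈ Θ i, dist x x₀ ≤ ε i) :
    ∃ s : ι → α, (∀ i, s i ∈ {x | x ∈ Θ i ∧ gn i x ≤ L * ε i + δ i}) ∧
      Tendsto (fun i => f (s i)) l (𝓝 (f x₀)) := by
  choose s hsΘ hsd using happ
  refine ⟨s, fun i => ⟨hsΘ i, ?_⟩, ?_⟩
  · have hgn := (abs_le.1 (hunif i (s i) (hΘX i (hsΘ i)))).2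
    have hg := (abs_le.1 (hglip _ (hΘX i (hsΘ i)) x₀ hx₀)).2
    have hdist := mul_le_mul_of_nonneg_left (hsd i) hL
    linarith
  · exact (hf x₀ hx₀).tendsto.comp <|
      tendsto_nhdsWithin_iff.2 ⟨tendsto_of_dist_le hsd hε, .of_forall fun i => hΘX i (hsΘ i)⟩

end

theorem stmt9_general {M : Type*} [MetricSpace M]
    (Θ : ℕ → Set M)
    (Θinf : Set M) (hΘinf : Θinf = closure (⋃ n, Θ n)) (hcomp : IsCompact Θinf)
    (ε τ δ : ℕ → ℝ)
    (hε : Tendsto ε atTop (nhds 0)) (hτ : Tendsto τ atTop (nhds 0))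
    (hδ : Tendsto δ atTop (nhds 0))
    (L : ℝ) (hL : 0 ≤ L)
    (f g : M → ℝ) (gn : ℕ → M → ℝ)
    (hf : ContinuousOn f Θinf) (hg : ContinuousOn g Θinf)
    (hlip : ∀ n, ∀ θ₁ ∈ Θinf, ∀ θ₂ ∈ Θinf,
      |gn n θ₁ - gn n θ₂| ≤ L * dist θ₁ θ₂ + τ n)
    (hnonneg : ∀ n, ∀ θ ∈ Θinf, 0 ≤ gn n θ)
    (hunif : ∀ n, ∀ θ ∈ Θinf, |gn n θ - g θ| ≤ δ n)
    (Θt : Set M) (hΘt : Θt ⊆ Θinf)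
    (happ : ∀ n, ∀ θ₀ ∈ Θt, ∃ θ ∈ Θ n, dist θ θ₀ ≤ ε n)
    (hfeast : {θ | θ ∈ Θt ∧ g θ = 0}.Nonempty) :
    sInf (f '' {θ | θ ∈ Θinf ∧ g θ = 0})
        ≤ liminf (fun n => sInf (f '' {θ | θ ∈ Θ n ∧ gn n θ ≤ L * ε n + δ n})) atTop
    ∧ limsup (fun n => sInf (f '' {θ | θ ∈ Θ n ∧ gn n θ ≤ L * ε n + δ n})) atTop
        ≤ sInf (f '' {θ | θ ∈ Θt ∧ g θ = 0}) := by
  have hsub : ∀ n, Θ n ⊆ Θinf := fun n => hΘinf ▸ (subset_iUnion Θ n).trans subset_closure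
  have hgconv : ∀ θ ∈ Θinf, Tendsto (fun n => gn n θ) atTop (𝓝 (g θ)) := fun θ hθ =>
    tendsto_of_dist_le (fun n => (Real.dist_eq _ _).trans_le (hunif n θ hθ)) hδ
  have hg0 : ∀ θ ∈ Θinf, 0 ≤ g θ := fun θ hθ =>
    ge_of_tendsto' (hgconv θ hθ) fun n => hnonneg n θ hθ
  have hglip := abs_sub_le_mul_dist_of_tendsto hgconv hτ hlip
  have happrox : ∀ θ₀ ∈ Θt, g θ₀ = 0 → _ := fun θ₀ hθ₀ hgθ₀ =>
    exists_feasible_seq_tendsto hsub hL hf hglip hunif hε (hΘt hθ₀) hgθ₀ fun n => happ n θ₀ hθ₀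
  obtain ⟨c, hc⟩ := hcomp.bddBelow_image hf
  have hcF : ∀ n, ∀ θ ∈ {θ | θ ∈ Θ n ∧ gn n θ ≤ L * ε n + δ n}, c ≤ f θ := fun n θ hθ =>
    hc (mem_image_of_mem f (hsub n hθ.1))
  obtain ⟨θt, hθt, hgθt⟩ := hfeast
  obtain ⟨s, hs, hsf⟩ := happrox θt hθt hgθt
  have hgF : ∀ n, ∀ θ ∈ {θ | θ ∈ Θ n ∧ gn n θ ≤ L * ε n + δ n}, g θ ≤ L * ε n + 2 * δ n :=
    fun n θ hθ => by linarith [(abs_le.1 (hunif n θ (hsub n hθ.1))).1, hθ.2]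
  have hr : Tendsto (fun n => L * ε n + 2 * δ n) atTop (𝓝 0) := by
    simpa using (hε.const_mul L).add (hδ.const_mul 2)
  refine ⟨sInf_image_zeros_le_liminf hcomp hf hg hg0 (fun n _ hθ => hsub n hθ.1) hgF hr hs hsf,
    le_csInf ⟨_, mem_image_of_mem f ⟨hθt, hgθt⟩⟩ (forall_mem_image.2 fun θ₀ hθ₀ => ?_)⟩
  obtain ⟨s₀, hs₀, hs₀f⟩ := happrox θ₀ hθ₀.1 hθ₀.2
  exact limsup_sInf_image_le hcF hs₀ hs₀f

/-- Convergence of constrained optimization values: under approximate Lipschitz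
continuity of the empirical constraints `gₙ`, uniform convergence `gₙ → g`, and
approximability of the compact subset `Θ̃_∞` by `Θₙ`, the optimal values
`fₙ* = inf{f(θ) : θ ∈ Θₙ, gₙ(θ) ≤ L εₙ + δₙ}` satisfy
`f* ≤ liminf fₙ*` and `limsup fₙ* ≤ f̃*`. -/
theorem stmt9 {M : Type*} [MetricSpace M]
    (Θ : ℕ → Set M) (hmono : Monotone Θ)
    (Θinf : Set M) (hΘinf : Θinf = closure (⋃ n, Θ n)) (hcomp : IsCompact Θinf)
    (ε τ δ : ℕ → ℝ)
    (hεpos : ∀ n, 0 < ε n) (hτpos : ∀ n, 0 < τ n) (hδpos : ∀ n, 0 < δ n)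
    (hε : Tendsto ε atTop (nhds 0)) (hτ : Tendsto τ atTop (nhds 0))
    (hδ : Tendsto δ atTop (nhds 0))
    (L : ℝ) (hL : 0 ≤ L)
    (f g : M → ℝ) (gn : ℕ → M → ℝ)
    (hf : ContinuousOn f Θinf) (hg : ContinuousOn g Θinf)
    (hgn : ∀ n, ContinuousOn (gn n) Θinf)
    (hlip : ∀ n, ∀ θ₁ ∈ Θinf, ∀ θ₂ ∈ Θinf,
      |gn n θ₁ - gn n θ₂| ≤ L * dist θ₁ θ₂ + τ n)
    (hnonneg : ∀ n, ∀ θ ∈ Θinf, 0 ≤ gn n θ)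
    (hunif : ∀ n, ∀ θ ∈ Θinf, |gn n θ - g θ| ≤ δ n)
    (Θt : Set M) (hΘt : Θt ⊆ Θinf) (hΘtc : IsCompact Θt)
    (happ : ∀ n, ∀ θ₀ ∈ Θt, ∃ θ ∈ Θ n, dist θ θ₀ ≤ ε n)
    (hfeas : {θ | θ ∈ Θinf ∧ g θ = 0}.Nonempty)
    (hfeast : {θ | θ ∈ Θt ∧ g θ = 0}.Nonempty) :
    sInf (f '' {θ | θ ∈ Θinf ∧ g θ = 0})
        ≤ liminf (fun n => sInf (f '' {θ | θ ∈ Θ n ∧ gn n θ ≤ L * ε n + δ n})) atTop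
    ∧ limsup (fun n => sInf (f '' {θ | θ ∈ Θ n ∧ gn n θ ≤ L * ε n + δ n})) atTop
        ≤ sInf (f '' {θ | θ ∈ Θt ∧ g θ = 0}) :=
  stmt9_general Θ Θinf hΘinf hcomp ε τ δ hε hτ hδ L hL f g gn hf hg hlip hnonneg hunif Θt hΘt happ
    hfeast
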